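/- Let [B,i,j] be a framed representation on V¹ and [B',i',j'] a framed representation on V², and suppose both satisfy the moment-map equation. Then τ(σ(ξ)) = 0 for every ξ ∈ L(V¹,V²), i.e. the composite τ ∘ σ is the zero map. -/
import Mathlib


noncomputable section

/-- Cast of graded components of a family of `ℂ`-vector spaces along an equality of indices. -/
def lcast {I : Type} (V : I → Type) [∀ i, AddCommGroup (V i)] [∀ i, Module ℂ (V i)]
    {i j : I} (hij : i = j) : V i ≃ₗ[ℂ] V j := by
  subst hij; exact LinearEquiv.refl ℂ (V i)

/-- If framed representations `[B,i,j]` on `V1` and `[B',i',j']` on `V2`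
both satisfy the moment-map equation, then `τ ∘ σ = 0`. -/


lemma sum_compL {R M N P : Type*} [CommSemiring R] [AddCommMonoid M] [AddCommMonoid N]
    [AddCommMonoid P] [Module R M] [Module R N] [Module R P] {ι : Type*} (s : Finset ι)
    (f : ι → N →ₗ[R] P) (g : M →ₗ[R] N) :
    (∑ h ∈ s, f h) ∘ₗ g = ∑ h ∈ s, f h ∘ₗ g := by
  ext v; simp

lemma compL_sum {R M N P : Type*} [CommSemiring R] [AddCommMonoid M] [AddCommMonoid N]
    [AddCommMonoid P] [Module R M] [Module R N] [Module R P] {ι : Type*} (s : Finset ι)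
    (f : ι → M →ₗ[R] N) (g : N →ₗ[R] P) :
    g ∘ₗ (∑ h ∈ s, f h) = ∑ h ∈ s, g ∘ₗ f h := by
  ext v; simp

lemma lcast_key {I : Type} (V1 V2 : I → Type)
    [∀ i, AddCommGroup (V1 i)] [∀ i, Module ℂ (V1 i)]
    [∀ i, AddCommGroup (V2 i)] [∀ i, Module ℂ (V2 i)]
    {p q p' q' k : I} (eq' : q' = q) (ep' : p' = p) (hk : q = k) (c : ℂ)
    (X : V1 p →ₗ[ℂ] V1 q) (Y : V1 q' →ₗ[ℂ] V1 p')
    (X' : V2 p →ₗ[ℂ] V2 q) (Y' : V2 q' →ₗ[ℂ] V2 p')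
    (ξ : ∀ i, V1 i →ₗ[ℂ] V2 i) :
    c • ((lcast V2 hk).toLinearMap ∘ₗ
      (X' ∘ₗ (lcast V2 ep').toLinearMap ∘ₗ (Y' ∘ₗ ξ q' - ξ p' ∘ₗ Y)
        + (X' ∘ₗ ξ p - ξ q ∘ₗ X) ∘ₗ (lcast V1 ep').toLinearMap ∘ₗ Y)
      ∘ₗ (lcast V1 (eq'.trans hk)).symm.toLinearMap)
    = (c • ((lcast V2 hk).toLinearMap ∘ₗ X' ∘ₗ (lcast V2 ep').toLinearMap ∘ₗ Y'
        ∘ₗ (lcast V2 (eq'.trans hk)).symm.toLinearMap)) ∘ₗ ξ k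
      - ξ k ∘ₗ (c • ((lcast V1 hk).toLinearMap ∘ₗ X ∘ₗ (lcast V1 ep').toLinearMap ∘ₗ Y
        ∘ₗ (lcast V1 (eq'.trans hk)).symm.toLinearMap)) := by
  subst eq' ep' hk
  ext v
  simp [lcast, smul_sub, mul_comm]

theorem stmt0
    {I H : Type} [Fintype I] [Fintype H] [DecidableEq I]
    (s t : H → I) (bar : H → H)
    (bar_invol : ∀ h, bar (bar h) = h) (bar_ne : ∀ h, bar h ≠ h)
    (s_bar : ∀ h, s (bar h) = t h) (t_bar : ∀ h, t (bar h) = s h)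
    (eps : H → ℤ) (eps_pm : ∀ h, eps h = 1 ∨ eps h = -1)
    (eps_bar : ∀ h, eps (bar h) = - eps h)
    (V1 V2 W : I → Type)
    [∀ i, AddCommGroup (V1 i)] [∀ i, Module ℂ (V1 i)] [∀ i, FiniteDimensional ℂ (V1 i)]
    [∀ i, AddCommGroup (V2 i)] [∀ i, Module ℂ (V2 i)] [∀ i, FiniteDimensional ℂ (V2 i)]
    [∀ i, AddCommGroup (W i)] [∀ i, Module ℂ (W i)] [∀ i, FiniteDimensional ℂ (W i)]
    (B : ∀ h, V1 (s h) →ₗ[ℂ] V1 (t h)) (iV : ∀ i, W i →ₗ[ℂ] V1 i) (jV : ∀ i, V1 i →ₗ[ℂ] W i)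
    (B' : ∀ h, V2 (s h) →ₗ[ℂ] V2 (t h)) (iV' : ∀ i, W i →ₗ[ℂ] V2 i) (jV' : ∀ i, V2 i →ₗ[ℂ] W i)
    -- the moment-map equation for [B, iV, jV]
    (hmm1 : ∀ k : I,
      (∑ h : H, if hk : t h = k then
        (eps h : ℂ) • ((lcast V1 hk).toLinearMap ∘ₗ B h ∘ₗ (lcast V1 (t_bar h)).toLinearMap
          ∘ₗ B (bar h) ∘ₗ (lcast V1 ((s_bar h).trans hk)).symm.toLinearMap) else 0)
        + iV k ∘ₗ jV k = 0)
    -- the moment-map equation for [B', iV', jV']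
    (hmm2 : ∀ k : I,
      (∑ h : H, if hk : t h = k then
        (eps h : ℂ) • ((lcast V2 hk).toLinearMap ∘ₗ B' h ∘ₗ (lcast V2 (t_bar h)).toLinearMap
          ∘ₗ B' (bar h) ∘ₗ (lcast V2 ((s_bar h).trans hk)).symm.toLinearMap) else 0)
        + iV' k ∘ₗ jV' k = 0)
    (ξ : ∀ i, V1 i →ₗ[ℂ] V2 i) :
    -- τ(σ(ξ)) = 0
    ∀ k : I,
      (∑ h : H, if hk : t h = k then
        (eps h : ℂ) • ((lcast V2 hk).toLinearMap ∘ₗ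
          (B' h ∘ₗ (lcast V2 (t_bar h)).toLinearMap
              ∘ₗ (B' (bar h) ∘ₗ ξ (s (bar h)) - ξ (t (bar h)) ∘ₗ B (bar h))
            + (B' h ∘ₗ ξ (s h) - ξ (t h) ∘ₗ B h) ∘ₗ (lcast V1 (t_bar h)).toLinearMap ∘ₗ B (bar h))
          ∘ₗ (lcast V1 ((s_bar h).trans hk)).symm.toLinearMap) else 0)
      + iV' k ∘ₗ (jV' k ∘ₗ ξ k) + (-(ξ k ∘ₗ iV k)) ∘ₗ jV k = 0 := by
  intro k
  have hsum : (∑ h : H, if hk : t h = k then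
        (eps h : ℂ) • ((lcast V2 hk).toLinearMap ∘ₗ
          (B' h ∘ₗ (lcast V2 (t_bar h)).toLinearMap
              ∘ₗ (B' (bar h) ∘ₗ ξ (s (bar h)) - ξ (t (bar h)) ∘ₗ B (bar h))
            + (B' h ∘ₗ ξ (s h) - ξ (t h) ∘ₗ B h) ∘ₗ (lcast V1 (t_bar h)).toLinearMap ∘ₗ B (bar h))
          ∘ₗ (lcast V1 ((s_bar h).trans hk)).symm.toLinearMap) else 0)
      = (∑ h : H, if hk : t h = k then
          (eps h : ℂ) • ((lcast V2 hk).toLinearMap ∘ₗ B' h ∘ₗ (lcast V2 (t_bar h)).toLinearMap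
            ∘ₗ B' (bar h) ∘ₗ (lcast V2 ((s_bar h).trans hk)).symm.toLinearMap) else 0) ∘ₗ ξ k
        - ξ k ∘ₗ (∑ h : H, if hk : t h = k then
          (eps h : ℂ) • ((lcast V1 hk).toLinearMap ∘ₗ B h ∘ₗ (lcast V1 (t_bar h)).toLinearMap
            ∘ₗ B (bar h) ∘ₗ (lcast V1 ((s_bar h).trans hk)).symm.toLinearMap) else 0) := by
    rw [sum_compL, compL_sum, ← Finset.sum_sub_distrib]
    refine Finset.sum_congr rfl fun h _ => ?_
    by_cases hk : t h = k
    · simp only [dif_pos hk]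
      exact lcast_key V1 V2 (s_bar h) (t_bar h) hk _ (B h) (B (bar h)) (B' h) (B' (bar h)) ξ
    · simp [dif_neg hk]
  have h2 := eq_neg_of_add_eq_zero_left (hmm2 k)
  have h1 := eq_neg_of_add_eq_zero_left (hmm1 k)
  rw [hsum, h1, h2]
  ext v
  simp
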